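/- arXiv:2602.04140 — 3 statements merged into one kernel-verified Lean document; each statement's English description precedes it below -/
import Mathlib

section
/- Let G = C⃗ₙ^S with s, t, r ∈ S satisfying r ≡ s + t (mod n). Define P^{s,t} = Σ_{a ∈ ℤ/nℤ} e_{a, a+s, a+r, a+r+s}. Then ∂P^{s,t} = W^{s,r} − W^{s,t}, where W^{x,y} = Σ_a (e_{a,a+x,a+x+y} − e_{a,a+y,a+x+y}). -/
/-- The GLMY boundary: `bdry V K m` maps the free `K`-space on paths with `m+2` vertices to
the free `K`-space on paths with `m+1` vertices, by the alternating sum of vertex deletions. -/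
noncomputable def bdry (V : Type) (K : Type) [Field K] (m : ℕ) :
    ((Fin (m + 2) → V) →₀ K) →ₗ[K] ((Fin (m + 1) → V) →₀ K) :=
  Finsupp.lsum K fun p =>
    ∑ j : Fin (m + 2), ((-1 : K) ^ (j : ℕ)) • Finsupp.lsingle (fun i => p (j.succAbove i))

/-- `W^{x,y} = Σ_a (e_{a,a+x,a+x+y} - e_{a,a+y,a+x+y})`. -/
noncomputable def Wcycle (n : ℕ) [NeZero n] (K : Type) [Field K] (x y : ZMod n) :
    (Fin 3 → ZMod n) →₀ K :=
  ∑ a : ZMod n,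
    (Finsupp.single ![a, a + x, a + x + y] 1 - Finsupp.single ![a, a + y, a + x + y] 1)

/-- `P^{s,t} = Σ_a e_{a,a+s,a+r,a+r+s}`. -/
noncomputable def Pchain (n : ℕ) [NeZero n] (K : Type) [Field K] (s r : ZMod n) :
    (Fin 4 → ZMod n) →₀ K :=
  ∑ a : ZMod n, Finsupp.single ![a, a + s, a + r, a + r + s] 1

/-!
Each of the four faces of `e_{a,a+s,a+r,a+r+s}` is a triangle of `W^{s,r}` or `W^{s,t}`. Three
of them already have first vertex `a`; the face opposite `a` is `e_{a+s,a+r,a+r+s}`, which after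
re-indexing the sum by `a ↦ a + s` becomes `e_{a,a+t,a+s+t}` because `r - s = t`.
-/

theorem bdry_single_four {V K : Type} [Field K] (p : Fin 4 → V) (c : K) :
    bdry V K 2 (Finsupp.single p c) =
      Finsupp.single ![p 1, p 2, p 3] c - Finsupp.single ![p 0, p 2, p 3] c
        + Finsupp.single ![p 0, p 1, p 3] c - Finsupp.single ![p 0, p 1, p 2] c := by
  obtain ⟨h0, h1, h2, h3⟩ :
      (fun i => p ((0 : Fin 4).succAbove i)) = ![p 1, p 2, p 3] ∧
      (fun i => p ((1 : Fin 4).succAbove i)) = ![p 0, p 2, p 3] ∧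
      (fun i => p ((2 : Fin 4).succAbove i)) = ![p 0, p 1, p 3] ∧
      (fun i => p ((3 : Fin 4).succAbove i)) = ![p 0, p 1, p 2] := by
    refine ⟨?_, ?_, ?_, ?_⟩ <;> ext i <;> fin_cases i <;> rfl
  rw [bdry, Finsupp.lsum_single, LinearMap.sum_apply, Fin.sum_univ_four]
  simp only [LinearMap.smul_apply, Finsupp.lsingle_apply, h0, h1, h2, h3]
  norm_num
  abel

theorem bdry_Pchain (n : ℕ) [NeZero n] (K : Type) [Field K] (s r : ZMod n) :
    bdry (ZMod n) K 2 (Pchain n K s r) =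
      ∑ a : ZMod n, (Finsupp.single ![a + s, a + r, a + r + s] 1
        - Finsupp.single ![a, a + r, a + r + s] 1 + Finsupp.single ![a, a + s, a + r + s] 1
        - Finsupp.single ![a, a + s, a + r] 1) := by
  simp only [Pchain, map_sum, bdry_single_four]
  rfl

theorem boundary_Pchain_general (n : ℕ) [NeZero n] (K : Type) [Field K]
    (s t r : ZMod n) (hsum : r = s + t) :
    bdry (ZMod n) K 2 (Pchain n K s r) = Wcycle n K s r - Wcycle n K s t := by
  subst hsum
  have shift : ∑ a : ZMod n, Finsupp.single ![a + s, a + (s + t), a + (s + t) + s] (1 : K) =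
      ∑ a : ZMod n, Finsupp.single ![a, a + t, a + s + t] 1 :=
    Fintype.sum_equiv (Equiv.addRight s) _ _ fun a => by
      congr 1; ext i; fin_cases i <;> simp <;> abel
  rw [bdry_Pchain, Wcycle, Wcycle]
  simp only [Finset.sum_sub_distrib, Finset.sum_add_distrib]
  rw [shift]
  simp only [← add_assoc, add_right_comm _ t s]
  abel

/-- If `r = s + t` in `ZMod n` with `s, t, r ∈ S`, then `∂ P^{s,t} = W^{s,r} - W^{s,t}`. -/
theorem boundary_Pchain (n : ℕ) [NeZero n] (hn : 3 ≤ n) (K : Type) [Field K] [CharZero K]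
    (S : Set (ZMod n)) (s t r : ZMod n) (hs : s ∈ S) (ht : t ∈ S) (hr : r ∈ S)
    (hsum : r = s + t) :
    bdry (ZMod n) K 2 (Pchain n K s r) = Wcycle n K s r - Wcycle n K s t :=
  boundary_Pchain_general n K s t r hsum
end

section
/- Over any field K of characteristic 0 and any t ∈ K, the 3×5 matrix M₂(t) = [[t+1, 0, 1−t², 1−t⁴, 0], [−1, t²+1, t−1, 0, 1−t⁴], [0, −1, 0, t−1, t²−1]] has rank exactly 2. -/
/-!
Row 0 of `M₂(t)` is `-(t + 1)` times row 1 plus `-(t + 1)(t² + 1)` times row 2, so `M₂(t)`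
factors through `K²` and has rank at most `2`. Rows 1 and 2 restricted to columns 0 and 1 form
the unitriangular block `[[-1, t² + 1], [0, -1]]`, whose determinant is `1`, so the rank is at
least `2`.
-/

namespace Matrix

variable {R : Type*} [CommRing R] [StrongRankCondition R]
  {m n o ι : Type*} [Fintype n] [Fintype o] [Fintype ι] [DecidableEq ι]

theorem rank_mul_le_card_inner (A : Matrix m n R) (B : Matrix n o R) :
    (A * B).rank ≤ Fintype.card n :=
  (rank_mul_le_left A B).trans (rank_le_card_width A)

theorem card_le_rank_of_isUnit_det_submatrix (A : Matrix m n R) (r : ι → m) (c : ι → n)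
    (h : IsUnit (A.submatrix r c).det) : Fintype.card ι ≤ A.rank := by
  rw [← rank_of_isUnit _ ((isUnit_iff_isUnit_det _).mpr h)]
  exact rank_submatrix_le A r c

end Matrix

section SymbolM2

variable {R : Type*} [CommRing R]

/-- The symbol matrix `M₂(t)`. -/
def symbolM2 (t : R) : Matrix (Fin 3) (Fin 5) R :=
  !![t + 1, 0, 1 - t ^ 2, 1 - t ^ 4, 0;
     -1, t ^ 2 + 1, t - 1, 0, 1 - t ^ 4;
     0, -1, 0, t - 1, t ^ 2 - 1]

theorem symbolM2_eq_mul (t : R) :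
    symbolM2 t = !![-(t + 1), -((t + 1) * (t ^ 2 + 1)); 1, 0; 0, 1] *
      !![-1, t ^ 2 + 1, t - 1, 0, 1 - t ^ 4;
         0, -1, 0, t - 1, t ^ 2 - 1] := by
  ext i j
  fin_cases i <;> fin_cases j <;>
    simp [symbolM2, Matrix.mul_apply, Fin.sum_univ_succ] <;> ring

theorem det_symbolM2_submatrix (t : R) :
    ((symbolM2 t).submatrix ![1, 2] ![0, 1]).det = 1 := by
  rw [Matrix.det_fin_two]
  simp [symbolM2]

end SymbolM2

theorem rank_M2_symbol_124_general (K : Type) [Field K] (t : K) :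
    (!![t + 1, 0, 1 - t ^ 2, 1 - t ^ 4, 0;
        -1, t ^ 2 + 1, t - 1, 0, 1 - t ^ 4;
        0, -1, 0, t - 1, t ^ 2 - 1] : Matrix (Fin 3) (Fin 5) K).rank = 2 := by
  change (symbolM2 t).rank = 2
  apply le_antisymm
  · rw [symbolM2_eq_mul]
    exact (Matrix.rank_mul_le_card_inner _ _).trans_eq (Fintype.card_fin 2)
  · have hunit : IsUnit ((symbolM2 t).submatrix ![1, 2] ![0, 1]).det := by
      rw [det_symbolM2_submatrix]
      exact isUnit_one
    simpa using Matrix.card_le_rank_of_isUnit_det_submatrix _ _ _ hunit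

/-- The symbol matrix `M₂(t)` of `∂₂` for the circulant digraph `C⃗ₙ^{1,2,4}` has rank
exactly `2` for every `t` in a field of characteristic `0`. -/
theorem rank_M2_symbol_124 (K : Type) [Field K] [CharZero K] (t : K) :
    (!![t + 1, 0, 1 - t ^ 2, 1 - t ^ 4, 0;
        -1, t ^ 2 + 1, t - 1, 0, 1 - t ^ 4;
        0, -1, 0, t - 1, t ^ 2 - 1] : Matrix (Fin 3) (Fin 5) K).rank = 2 :=
  rank_M2_symbol_124_general K t
end

section
/- Let n ≥ 5 and G = C⃗₅^{1,2} (n = 5, S = {1,2}). For each m ≥ 1 and each a ∈ ℤ/5ℤ, the chains αₐ^{(m)} = e_{a,a+1,…,a+m} and βₐ^{(m)} = Σ_{j=1}^{m} (−1)^{m−j} e_{a,a+1,…,a+j−1,a+j+1,…,a+m+1} both lie in Ωₘ(G), i.e., they are allowed chains whose boundaries contain no illegal faces. -/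
/-- `αₐ^{(m)} = e_{a,a+1,…,a+m}` in `C⃗₅^{1,2}`. -/
noncomputable def alphaChain (K : Type) [Field K] (m : ℕ) (a : ZMod 5) :
    (Fin (m + 1) → ZMod 5) →₀ K :=
  Finsupp.single (fun i : Fin (m + 1) => a + ((i : ℕ) : ZMod 5)) 1

/-- `βₐ^{(m)} = Σ_{j=1}^{m} (−1)^{m−j} e_{a,a+1,…,a+j−1,a+j+1,…,a+m+1}` in `C⃗₅^{1,2}`. -/
noncomputable def betaChain (K : Type) [Field K] (m : ℕ) (a : ZMod 5) :
    (Fin (m + 1) → ZMod 5) →₀ K :=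
  ∑ j ∈ Finset.Icc 1 m, ((-1 : K) ^ (m - j)) •
    Finsupp.single
      (fun i : Fin (m + 1) =>
        if (i : ℕ) < j then a + ((i : ℕ) : ZMod 5) else a + ((i : ℕ) : ZMod 5) + 1) 1

/-!
Deleting a vertex of a path all of whose steps are `1` merges two steps into `1 + 1 = 2`, so
every face of `αₐ^{(m)}` is allowed and `αₐ^{(m)} ∈ Ωₘ`. The interior faces of `αₐ^{(m+1)}` are
exactly the paths of `βₐ^{(m)}`, whence
`(-1)^m βₐ^{(m)} = ∂αₐ^{(m+1)} - α_{a+1}^{(m)} + (-1)^m αₐ^{(m)}`.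
Since `∂ ∘ ∂ = 0`, the boundary maps `Ω_{m+1}` into `Ωₘ`, and so `βₐ^{(m)} ∈ Ωₘ`.
-/

open CategoryTheory AlgebraicTopology

/-- The simplicial `K`-module whose alternating face map complex has differential `bdry`;
Mathlib's `d_squared` for it is `∂ ∘ ∂ = 0`. -/
noncomputable def pathChains (V K : Type) [Field K] : SimplicialObject (ModuleCat K) where
  obj n := ModuleCat.of K ((Fin (n.unop.len + 1) → V) →₀ K)
  map f := ModuleCat.ofHom (Finsupp.lmapDomain K K (· ∘ f.unop.toOrderHom))
  map_id _ := by
    ext : 1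
    exact Finsupp.lmapDomain_id K K
  map_comp f g := by
    ext : 1
    exact Finsupp.lmapDomain_comp K K (· ∘ f.unop.toOrderHom) (· ∘ g.unop.toOrderHom)

section Boundary

variable (V K : Type) [Field K]

theorem bdry_eq_sum_lmapDomain (n : ℕ) :
    bdry V K n =
      ∑ j : Fin (n + 2), (-1 : ℤ) ^ (j : ℕ) • Finsupp.lmapDomain K K (· ∘ j.succAbove) := by
  ext p : 2
  simp [bdry, Finsupp.smul_single, Function.comp_def]

theorem bdry_eq_objD_pathChains (n : ℕ) :
    bdry V K n = (AlternatingFaceMapComplex.objD (pathChains V K) n).hom := by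
  rw [AlternatingFaceMapComplex.objD, ModuleCat.hom_sum, bdry_eq_sum_lmapDomain]
  rfl

theorem bdry_comp_bdry (m : ℕ) : bdry V K m ∘ₗ bdry V K (m + 1) = 0 := by
  have h := congrArg ModuleCat.Hom.hom (AlternatingFaceMapComplex.d_squared (pathChains V K) m)
  rw [ModuleCat.hom_comp] at h
  rw [bdry_eq_objD_pathChains, bdry_eq_objD_pathChains]
  exact h

theorem bdry_bdry (m : ℕ) (c : (Fin (m + 3) → V) →₀ K) :
    bdry V K m (bdry V K (m + 1) c) = 0 :=
  LinearMap.congr_fun (bdry_comp_bdry V K m) c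

variable {V K}

theorem bdry_single {m : ℕ} (p : Fin (m + 2) → V) (c : K) :
    bdry V K m (Finsupp.single p c) =
      ∑ j : Fin (m + 2), (-1 : K) ^ (j : ℕ) • Finsupp.single (p ∘ j.succAbove) c := by
  simp [bdry, Finsupp.smul_single, Function.comp_def]

end Boundary

section InvariantChains

variable {V : Type} [AddGroup V] (S : Set V) (K : Type) [Field K]

def IsAllowedPath {n : ℕ} (p : Fin (n + 1) → V) : Prop :=
  ∀ i : Fin n, p i.succ - p i.castSucc ∈ S

noncomputable def allowedChains (n : ℕ) : Submodule K ((Fin (n + 1) → V) →₀ K) :=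
  Finsupp.supported K K {p | IsAllowedPath S p}

/-- The space `Ωₙ` of `∂`-invariant `n`-paths of GLMY path homology. -/
noncomputable def invariantChains : (n : ℕ) → Submodule K ((Fin (n + 1) → V) →₀ K)
  | 0 => allowedChains S K 0
  | m + 1 => allowedChains S K (m + 1) ⊓ (allowedChains S K m).comap (bdry V K m)

variable {S K}

theorem mem_invariantChains_succ {m : ℕ} {c : (Fin (m + 2) → V) →₀ K} :
    c ∈ invariantChains S K (m + 1) ↔
      (∀ p ∈ c.support, IsAllowedPath S p) ∧
        ∀ q, ¬ IsAllowedPath S q → bdry V K m c q = 0 := by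
  rw [invariantChains, Submodule.mem_inf, Submodule.mem_comap, allowedChains, allowedChains,
    Finsupp.mem_supported, Finsupp.mem_supported']
  rfl

theorem bdry_mem_invariantChains {m : ℕ} {c : (Fin (m + 3) → V) →₀ K}
    (hc : c ∈ invariantChains S K (m + 2)) :
    bdry V K (m + 1) c ∈ invariantChains S K (m + 1) := by
  refine Submodule.mem_inf.mpr ⟨hc.2, ?_⟩
  rw [Submodule.mem_comap, bdry_bdry]
  exact zero_mem _

theorem single_mem_invariantChains {m : ℕ} {p : Fin (m + 2) → V} (c : K)
    (hp : IsAllowedPath S p) (hfaces : ∀ j : Fin (m + 2), IsAllowedPath S (p ∘ j.succAbove)) :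
    Finsupp.single p c ∈ invariantChains S K (m + 1) := by
  refine Submodule.mem_inf.mpr ⟨Finsupp.single_mem_supported K c hp, ?_⟩
  rw [Submodule.mem_comap, bdry_single]
  exact Submodule.sum_mem _ fun j _ =>
    Submodule.smul_mem _ _ (Finsupp.single_mem_supported K c (hfaces j))

end InvariantChains

theorem Fin.val_succAbove_eq_ite {n : ℕ} (k : Fin (n + 1)) (i : Fin n) :
    (k.succAbove i : ℕ) = if (i : ℕ) < k then (i : ℕ) else i + 1 := by
  rw [Fin.succAbove]
  split_ifs <;> simp_all [Fin.lt_def]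

theorem Fin.val_succAbove_succ {n : ℕ} (k : Fin (n + 2)) (i : Fin n) :
    (k.succAbove i.succ : ℕ) = k.succAbove i.castSucc + 1 ∨
      (k.succAbove i.succ : ℕ) = k.succAbove i.castSucc + 2 := by
  simp only [Fin.val_succAbove_eq_ite, Fin.val_succ, Fin.val_castSucc]
  split_ifs <;> omega

section UnitStepPath

variable {R : Type} [AddCommGroupWithOne R] (a : R)

def unitStepPath (n : ℕ) : Fin (n + 1) → R := fun i => a + (i : ℕ)

theorem isAllowedPath_unitStepPath (n : ℕ) : IsAllowedPath {1, 2} (unitStepPath a n) := by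
  intro i
  left
  simp [unitStepPath]

theorem isAllowedPath_unitStepPath_comp_succAbove {n : ℕ} (k : Fin (n + 2)) :
    IsAllowedPath {1, 2} (unitStepPath a (n + 1) ∘ k.succAbove) := by
  intro i
  rcases Fin.val_succAbove_succ k i with h | h
  · left
    simp [unitStepPath, h]
  · right
    simp [unitStepPath, h]

theorem unitStepPath_comp_succ (n : ℕ) :
    unitStepPath a (n + 1) ∘ Fin.succ = unitStepPath (a + 1) n := by
  funext i
  simp only [unitStepPath, Function.comp_apply, Fin.val_succ, Nat.cast_succ]
  abel

theorem unitStepPath_comp_castSucc (n : ℕ) :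
    unitStepPath a (n + 1) ∘ Fin.castSucc = unitStepPath a n :=
  rfl

end UnitStepPath

section AlphaBeta

variable (K : Type) [Field K]

theorem alphaChain_eq_single (n : ℕ) (a : ZMod 5) :
    alphaChain K n a = Finsupp.single (unitStepPath a n) 1 :=
  rfl

theorem alphaChain_mem_invariantChains (m : ℕ) (a : ZMod 5) :
    alphaChain K (m + 1) a ∈ invariantChains {1, 2} K (m + 1) :=
  single_mem_invariantChains 1 (isAllowedPath_unitStepPath a (m + 1))
    (isAllowedPath_unitStepPath_comp_succAbove a)

theorem bdry_alphaChain (n : ℕ) (a : ZMod 5) :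
    bdry (ZMod 5) K n (alphaChain K (n + 1) a) =
      alphaChain K n (a + 1) + (-1 : K) ^ n • betaChain K n a +
        (-1 : K) ^ (n + 1) • alphaChain K n a := by
  rw [alphaChain_eq_single, bdry_single, Fin.sum_univ_succ, Fin.sum_univ_castSucc, betaChain,
    ← Finset.Ico_add_one_right_eq_Icc, Finset.sum_Ico_eq_sum_range, add_tsub_cancel_right,
    ← Fin.sum_univ_eq_sum_range, Finset.smul_sum]
  have hinterior (j : Fin n) :
      (-1 : K) ^ (j.castSucc.succ : ℕ) •
          Finsupp.single (unitStepPath a (n + 1) ∘ j.castSucc.succ.succAbove) (1 : K) =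
        (-1 : K) ^ n • (-1 : K) ^ (n - (1 + j)) • Finsupp.single (fun i : Fin (n + 1) =>
          if (i : ℕ) < 1 + j then a + ((i : ℕ) : ZMod 5) else a + ((i : ℕ) : ZMod 5) + 1) 1 := by
    have hsign : (-1 : K) ^ n * (-1 : K) ^ (n - (1 + j)) = (-1) ^ (j.castSucc.succ : ℕ) := by
      rw [← pow_add, neg_one_pow_eq_pow_mod_two,
        neg_one_pow_eq_pow_mod_two (n := (j.castSucc.succ : ℕ)), Fin.val_succ, Fin.val_castSucc]
      congr 1
      omega
    have hface : unitStepPath a (n + 1) ∘ j.castSucc.succ.succAbove = fun i : Fin (n + 1) =>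
        if (i : ℕ) < 1 + j then a + ((i : ℕ) : ZMod 5) else a + ((i : ℕ) : ZMod 5) + 1 := by
      funext i
      simp only [unitStepPath, Function.comp_apply, Fin.val_succAbove_eq_ite, Fin.val_succ,
        Fin.val_castSucc]
      split_ifs <;> first | omega | push_cast; ring
    rw [smul_smul, hsign, hface]
  rw [Finset.sum_congr rfl fun j _ => hinterior j, Fin.succAbove_zero, unitStepPath_comp_succ,
    Fin.succ_last, Fin.succAbove_last, unitStepPath_comp_castSucc, Fin.val_last, Fin.val_zero,
    pow_zero, one_smul, alphaChain_eq_single, alphaChain_eq_single]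
  abel

theorem betaChain_mem_invariantChains (m : ℕ) (a : ZMod 5) :
    betaChain K (m + 1) a ∈ invariantChains {1, 2} K (m + 1) := by
  have h : (-1 : K) ^ (m + 1) • betaChain K (m + 1) a =
      bdry (ZMod 5) K (m + 1) (alphaChain K (m + 2) a) - alphaChain K (m + 1) (a + 1) -
        (-1 : K) ^ (m + 2) • alphaChain K (m + 1) a := by
    rw [bdry_alphaChain]
    abel
  refine (Submodule.smul_mem_iff _ (by simp : (-1 : K) ^ (m + 1) ≠ 0)).mp ?_
  rw [h]
  exact Submodule.sub_mem _ (Submodule.sub_mem _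
    (bdry_mem_invariantChains (alphaChain_mem_invariantChains K (m + 1) a))
    (alphaChain_mem_invariantChains K m (a + 1)))
    (Submodule.smul_mem _ _ (alphaChain_mem_invariantChains K m a))

end AlphaBeta

theorem alpha_beta_in_Omega_general (K : Type) [Field K] (m : ℕ) (a : ZMod 5) :
    (∀ p ∈ (alphaChain K (m + 1) a).support,
        ∀ i : Fin (m + 1), p i.succ - p i.castSucc ∈ ({1, 2} : Set (ZMod 5))) ∧
    (∀ p ∈ (betaChain K (m + 1) a).support,
        ∀ i : Fin (m + 1), p i.succ - p i.castSucc ∈ ({1, 2} : Set (ZMod 5))) ∧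
    (∀ q : Fin (m + 1) → ZMod 5,
        (¬ ∀ i : Fin m, q i.succ - q i.castSucc ∈ ({1, 2} : Set (ZMod 5))) →
        bdry (ZMod 5) K m (alphaChain K (m + 1) a) q = 0) ∧
    (∀ q : Fin (m + 1) → ZMod 5,
        (¬ ∀ i : Fin m, q i.succ - q i.castSucc ∈ ({1, 2} : Set (ZMod 5))) →
        bdry (ZMod 5) K m (betaChain K (m + 1) a) q = 0) := by
  obtain ⟨hα, hα_bdry⟩ := mem_invariantChains_succ.mp (alphaChain_mem_invariantChains K m a)
  obtain ⟨hβ, hβ_bdry⟩ := mem_invariantChains_succ.mp (betaChain_mem_invariantChains K m a)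
  exact ⟨hα, hβ, hα_bdry, hβ_bdry⟩

/-- For every `m ≥ 1` (written `m + 1`) and `a ∈ ℤ/5ℤ`, the chains `αₐ^{(m)}` and `βₐ^{(m)}`
lie in `Ωₘ(C⃗₅^{1,2})`: they are supported on allowed paths (all steps in `{1,2}`), and their
boundaries have no illegal faces (coefficients of non-allowed paths vanish). -/
theorem alpha_beta_in_Omega (K : Type) [Field K] [CharZero K] (m : ℕ) (a : ZMod 5) :
    (∀ p ∈ (alphaChain K (m + 1) a).support,
        ∀ i : Fin (m + 1), p i.succ - p i.castSucc ∈ ({1, 2} : Set (ZMod 5))) ∧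
    (∀ p ∈ (betaChain K (m + 1) a).support,
        ∀ i : Fin (m + 1), p i.succ - p i.castSucc ∈ ({1, 2} : Set (ZMod 5))) ∧
    (∀ q : Fin (m + 1) → ZMod 5,
        (¬ ∀ i : Fin m, q i.succ - q i.castSucc ∈ ({1, 2} : Set (ZMod 5))) →
        bdry (ZMod 5) K m (alphaChain K (m + 1) a) q = 0) ∧
    (∀ q : Fin (m + 1) → ZMod 5,
        (¬ ∀ i : Fin m, q i.succ - q i.castSucc ∈ ({1, 2} : Set (ZMod 5))) →
        bdry (ZMod 5) K m (betaChain K (m + 1) a) q = 0) :=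
  alpha_beta_in_Omega_general K m a
end
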